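/- Let A be an m×n real matrix, b ∈ ℝᵐ, x ∈ ℝⁿ, and let x* ∈ ℝⁿ satisfy A x* ≤ b componentwise. Then ‖(Ax − b)₊‖² ≤ ⟨Aᵀ(Ax − b)₊, x − x*⟩, where (v)₊ denotes the componentwise positive part of v ∈ ℝᵐ, ⟨·,·⟩ the Euclidean inner product on ℝⁿ, and ‖·‖ the Euclidean norm. (Inequality (eq. xxstarIneq) proved in the paper.) -/

import Mathlib

/-!
Write `r = A x - b` and `s = b - A x* ≥ 0`, so that `A (x - x*) = r + s`. Moving `Aᵀ` across the
inner product gives `⟨Aᵀ r₊, x - x*⟩ = ⟨r₊, r⟩ + ⟨r₊, s⟩`. The first term is `‖r₊‖²` because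
`t₊ t = t₊²` for every scalar `t`, and the second is nonnegative since `r₊ ≥ 0` and `s ≥ 0`.
-/

open Matrix BigOperators

/-- Reinterpret a plain vector as an element of Euclidean space. -/
noncomputable def toEuc {k : ℕ} (v : Fin k → ℝ) : EuclideanSpace ℝ (Fin k) := WithLp.toLp 2 v

/-- The componentwise positive part `(A x - b)₊` of the residual. -/
noncomputable def posRes {m n : ℕ} (A : Matrix (Fin m) (Fin n) ℝ) (b : Fin m → ℝ)
    (x : EuclideanSpace ℝ (Fin n)) : EuclideanSpace ℝ (Fin m) :=
  WithLp.toLp 2 (fun i => max 0 (A.mulVec x i - b i))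

lemma max_zero_mul_self {R : Type*} [Ring R] [LinearOrder R] [IsOrderedRing R] (t : R) :
    max 0 t * t = max 0 t * max 0 t := by
  rcases le_total t 0 with h | h <;> simp [h]

lemma sum_max_zero_sq_le_sum_max_zero_mul_add {ι R : Type*} [Fintype ι] [CommRing R]
    [LinearOrder R] [IsStrictOrderedRing R] (r s : ι → R) (hs : ∀ i, 0 ≤ s i) :
    ∑ i, max 0 (r i) ^ 2 ≤ ∑ i, max 0 (r i) * (r i + s i) := by
  gcongr with i
  rw [sq, mul_add, max_zero_mul_self]
  exact le_add_of_nonneg_right (mul_nonneg (le_max_left 0 _) (hs i))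

lemma inner_toEuc_transpose_mulVec {m n : ℕ} (A : Matrix (Fin m) (Fin n) ℝ)
    (p : EuclideanSpace ℝ (Fin m)) (y : EuclideanSpace ℝ (Fin n)) :
    inner ℝ (toEuc (Aᵀ *ᵥ p)) y = p ⬝ᵥ (A *ᵥ y) := by
  rw [toEuc, EuclideanSpace.inner_toLp_toLp, star_trivial, mulVec_transpose, dotProduct_comm,
    dotProduct_mulVec]

lemma norm_posRes_sq {m n : ℕ} (A : Matrix (Fin m) (Fin n) ℝ) (b : Fin m → ℝ)
    (x : EuclideanSpace ℝ (Fin n)) :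
    ‖posRes A b x‖ ^ 2 = ∑ i, max 0 ((A *ᵥ x) i - b i) ^ 2 := by
  simp [posRes, EuclideanSpace.norm_sq_eq]

/-- inequality (eq. xxstarIneq) of the paper: if `A x* ≤ b` componentwise,
then `‖(A x - b)₊‖² ≤ ⟨Aᵀ (A x - b)₊, x - x*⟩`. -/
theorem posRes_sq_le_inner {m n : ℕ} (A : Matrix (Fin m) (Fin n) ℝ) (b : Fin m → ℝ)
    (x xstar : EuclideanSpace ℝ (Fin n)) (hfeas : ∀ i, A.mulVec xstar i ≤ b i) :
    ‖posRes A b x‖ ^ 2 ≤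
      (inner ℝ (toEuc (Aᵀ.mulVec (posRes A b x))) (x - xstar) : ℝ) := by
  have hsplit : A *ᵥ (x - xstar).ofLp = fun i => ((A *ᵥ x) i - b i) + (b i - (A *ᵥ xstar) i) := by
    ext i
    simp only [WithLp.ofLp_sub, mulVec_sub, Pi.sub_apply]
    ring
  rw [inner_toEuc_transpose_mulVec, hsplit, norm_posRes_sq]
  exact sum_max_zero_sq_le_sum_max_zero_mul_add _ _ fun i => sub_nonneg.mpr (hfeas i)
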